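/- Let φ = dx∧ω + Re(dz₂∧dz₃∧dz₄) be the 3-form on ℝ⁷ = ℝ ⊕ ℂ³, where x is the coordinate on ℝ, ω is the standard Kähler form of ℂ³, and J is the standard complex structure of ℂ³. Let F be a real alternating 2-form on ℝ⁷ vanishing whenever one of its arguments lies in the factor ℝ (i.e. F is a 2-form on ℂ³). Then the contraction φ ⌟ F (the 1-form w ↦ ½ ∑_{i,j} φ(e_i, e_j, w)·F(e_i, e_j), sum over an orthonormal basis) vanishes identically if and only if F(Jv, Jw) = F(v, w) for all v, w ∈ ℂ³ and ∑_i F(e_i, J e_i) = 0 (sum over an orthonormal basis of ℂ³ over ℝ); that is, if and only if F is of type (1,1) and primitive (the pointwise Hermitian–Yang–Mills conditions F^{2,0} = 0 and ω.F = 0). -/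
import Mathlib


/- STATEMENT 10: For φ = dx∧ω + Re(dz₂∧dz₃∧dz₄) on ℝ⁷ = ℝ ⊕ ℂ³ and a 2-form F on
ℂ³ (extended by zero on the ℝ factor), the contraction φ ⌟ F vanishes iff F is of
type (1,1) (F(Jv,Jw) = F(v,w)) and primitive (∑ᵢ F(eᵢ, J eᵢ) = 0); that is, iff F
satisfies the pointwise Hermitian–Yang–Mills conditions. -/

set_option maxHeartbeats 2000000

noncomputable section

abbrev V7 := Fin 7 → ℝ

/-- Coordinate 1-forms: x = v 0, z₂ = v 1 + i·v 2, z₃ = v 3 + i·v 4, z₄ = v 5 + i·v 6. -/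
def dd (i : Fin 7) : V7 → ℝ := fun v => v i

/-- Wedge of two 1-forms. -/
def w2 (f g : V7 → ℝ) : V7 → V7 → ℝ := fun u v => f u * g v - f v * g u

/-- Wedge of a 1-form with an alternating 2-form. -/
def w12 (f : V7 → ℝ) (b : V7 → V7 → ℝ) : V7 → V7 → V7 → ℝ := fun v1 v2 v3 =>
  f v1 * b v2 v3 - f v2 * b v1 v3 + f v3 * b v1 v2

/-- Complex wedge of two ℂ-valued 1-forms. -/
def w2c (f g : V7 → ℂ) : V7 → V7 → ℂ := fun u v => f u * g v - f v * g u

/-- Complex wedge of a ℂ-valued 1-form with a ℂ-valued alternating 2-form. -/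
def w12c (f : V7 → ℂ) (b : V7 → V7 → ℂ) : V7 → V7 → V7 → ℂ := fun v1 v2 v3 =>
  f v1 * b v2 v3 - f v2 * b v1 v3 + f v3 * b v1 v2

/-- The complex coordinates of the ℂ³ factor. -/
def dz : Fin 3 → V7 → ℂ :=
  ![fun v => ⟨v 1, v 2⟩, fun v => ⟨v 3, v 4⟩, fun v => ⟨v 5, v 6⟩]

/-- The standard Kähler form ω = (i/2)∑ dz∧dz̄ of ℂ³. -/
def om : V7 → V7 → ℝ := fun u v =>
  w2 (dd 1) (dd 2) u v + w2 (dd 3) (dd 4) u v + w2 (dd 5) (dd 6) u v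

/-- The 3-form φ = dx∧ω + Re(dz₂∧dz₃∧dz₄). -/
def phi : V7 → V7 → V7 → ℝ := fun v1 v2 v3 =>
  w12 (dd 0) om v1 v2 v3 + (w12c (dz 0) (w2c (dz 1) (dz 2)) v1 v2 v3).re

/-- The standard complex structure J of ℂ³, extended by zero on the ℝ factor. -/
def J : V7 → V7 := fun v => ![0, -v 2, v 1, -v 4, v 3, -v 6, v 5]

/-- The standard basis of ℝ⁷. -/
def bb (i : Fin 7) : V7 := Pi.single i 1


lemma mk_re (a b : ℝ) : (Complex.mk a b).re = a := rfl
lemma mk_im (a b : ℝ) : (Complex.mk a b).im = b := rfl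
lemma dz0 (v : V7) : dz 0 v = ⟨v 1, v 2⟩ := rfl
lemma dz1 (v : V7) : dz 1 v = ⟨v 3, v 4⟩ := rfl
lemma dz2 (v : V7) : dz 2 v = ⟨v 5, v 6⟩ := rfl
lemma bbe (i j : Fin 7) : bb i j = if j = i then 1 else 0 := by
  simp [bb, Pi.single_apply]
lemma Jc0 (v : V7) : J v 0 = 0 := rfl
lemma Jc1 (v : V7) : J v 1 = -v 2 := rfl
lemma Jc2 (v : V7) : J v 2 = v 1 := rfl
lemma Jc3 (v : V7) : J v 3 = -v 4 := rfl
lemma Jc4 (v : V7) : J v 4 = v 3 := rfl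
lemma Jc5 (v : V7) : J v 5 = -v 6 := rfl
lemma Jc6 (v : V7) : J v 6 = v 5 := rfl
lemma hbasis (v : V7) : v = ∑ i : Fin 7, v i • bb i := by
  funext j
  rw [Finset.sum_apply]
  simp [bb, Pi.single_apply]
lemma cv5 {α : Type*} (a0 a1 a2 a3 a4 a5 a6 : α) : ![a0,a1,a2,a3,a4,a5,a6] 5 = a5 := rfl
lemma cv6 {α : Type*} (a0 a1 a2 a3 a4 a5 a6 : α) : ![a0,a1,a2,a3,a4,a5,a6] 6 = a6 := rfl
lemma hJb1 : J (bb 1) = bb 2 := by funext j; fin_cases j <;> simp [J, bbe, cv5, cv6]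
lemma hJb2 : J (bb 2) = -bb 1 := by funext j; fin_cases j <;> simp [J, bbe, cv5, cv6]
lemma hJb3 : J (bb 3) = bb 4 := by funext j; fin_cases j <;> simp [J, bbe, cv5, cv6]
lemma hJb4 : J (bb 4) = -bb 3 := by funext j; fin_cases j <;> simp [J, bbe, cv5, cv6]
lemma hJb5 : J (bb 5) = bb 6 := by funext j; fin_cases j <;> simp [J, bbe, cv5, cv6]
lemma hJb6 : J (bb 6) = -bb 5 := by funext j; fin_cases j <;> simp [J, bbe, cv5, cv6]

lemma phi_eval (u v w : V7) : phi u v w =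
    (u 0 * (v 1 * w 2 - v 2 * w 1) - v 0 * (u 1 * w 2 - u 2 * w 1) + w 0 * (u 1 * v 2 - u 2 * v 1))
  + (u 0 * (v 3 * w 4 - v 4 * w 3) - v 0 * (u 3 * w 4 - u 4 * w 3) + w 0 * (u 3 * v 4 - u 4 * v 3))
  + (u 0 * (v 5 * w 6 - v 6 * w 5) - v 0 * (u 5 * w 6 - u 6 * w 5) + w 0 * (u 5 * v 6 - u 6 * v 5))
  + (u 1 * (v 3 * w 5 - v 5 * w 3) - v 1 * (u 3 * w 5 - u 5 * w 3) + w 1 * (u 3 * v 5 - u 5 * v 3))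
  - (u 1 * (v 4 * w 6 - v 6 * w 4) - v 1 * (u 4 * w 6 - u 6 * w 4) + w 1 * (u 4 * v 6 - u 6 * v 4))
  - (u 2 * (v 3 * w 6 - v 6 * w 3) - v 2 * (u 3 * w 6 - u 6 * w 3) + w 2 * (u 3 * v 6 - u 6 * v 3))
  - (u 2 * (v 4 * w 5 - v 5 * w 4) - v 2 * (u 4 * w 5 - u 5 * w 4) + w 2 * (u 4 * v 5 - u 5 * v 4)) := by
  simp only [phi, w12, w12c, w2, w2c, om, dd, dz0, dz1, dz2, Complex.mul_re, Complex.mul_im,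
    Complex.sub_re, Complex.sub_im, Complex.add_re, Complex.add_im, mk_re, mk_im]
  ring

lemma hFexp (F : V7 →ₗ[ℝ] V7 →ₗ[ℝ] ℝ) (v w : V7) :
    F v w = ∑ i : Fin 7, ∑ j : Fin 7, v i * (w j * F (bb i) (bb j)) := by
  conv_lhs => rw [hbasis v, hbasis w]
  simp [map_sum, LinearMap.sum_apply, smul_eq_mul, Finset.mul_sum]
  rw [Finset.sum_comm]
  exact Finset.sum_congr rfl fun i _ => Finset.sum_congr rfl fun j _ => by ring

lemma ph00 (w : V7) : phi (bb 0) (bb 0) w = 0 := by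
  rw [phi_eval]; simp [bbe]; try ring
lemma ph01 (w : V7) : phi (bb 0) (bb 1) w = w 2 := by
  rw [phi_eval]; simp [bbe]; try ring
lemma ph02 (w : V7) : phi (bb 0) (bb 2) w = -w 1 := by
  rw [phi_eval]; simp [bbe]; try ring
lemma ph03 (w : V7) : phi (bb 0) (bb 3) w = w 4 := by
  rw [phi_eval]; simp [bbe]; try ring
lemma ph04 (w : V7) : phi (bb 0) (bb 4) w = -w 3 := by
  rw [phi_eval]; simp [bbe]; try ring
lemma ph05 (w : V7) : phi (bb 0) (bb 5) w = w 6 := by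
  rw [phi_eval]; simp [bbe]; try ring
lemma ph06 (w : V7) : phi (bb 0) (bb 6) w = -w 5 := by
  rw [phi_eval]; simp [bbe]; try ring
lemma ph10 (w : V7) : phi (bb 1) (bb 0) w = -w 2 := by
  rw [phi_eval]; simp [bbe]; try ring
lemma ph11 (w : V7) : phi (bb 1) (bb 1) w = 0 := by
  rw [phi_eval]; simp [bbe]; try ring
lemma ph12 (w : V7) : phi (bb 1) (bb 2) w = w 0 := by
  rw [phi_eval]; simp [bbe]; try ring
lemma ph13 (w : V7) : phi (bb 1) (bb 3) w = w 5 := by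
  rw [phi_eval]; simp [bbe]; try ring
lemma ph14 (w : V7) : phi (bb 1) (bb 4) w = -w 6 := by
  rw [phi_eval]; simp [bbe]; try ring
lemma ph15 (w : V7) : phi (bb 1) (bb 5) w = -w 3 := by
  rw [phi_eval]; simp [bbe]; try ring
lemma ph16 (w : V7) : phi (bb 1) (bb 6) w = w 4 := by
  rw [phi_eval]; simp [bbe]; try ring
lemma ph20 (w : V7) : phi (bb 2) (bb 0) w = w 1 := by
  rw [phi_eval]; simp [bbe]; try ring
lemma ph21 (w : V7) : phi (bb 2) (bb 1) w = -w 0 := by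
  rw [phi_eval]; simp [bbe]; try ring
lemma ph22 (w : V7) : phi (bb 2) (bb 2) w = 0 := by
  rw [phi_eval]; simp [bbe]; try ring
lemma ph23 (w : V7) : phi (bb 2) (bb 3) w = -w 6 := by
  rw [phi_eval]; simp [bbe]; try ring
lemma ph24 (w : V7) : phi (bb 2) (bb 4) w = -w 5 := by
  rw [phi_eval]; simp [bbe]; try ring
lemma ph25 (w : V7) : phi (bb 2) (bb 5) w = w 4 := by
  rw [phi_eval]; simp [bbe]; try ring
lemma ph26 (w : V7) : phi (bb 2) (bb 6) w = w 3 := by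
  rw [phi_eval]; simp [bbe]; try ring
lemma ph30 (w : V7) : phi (bb 3) (bb 0) w = -w 4 := by
  rw [phi_eval]; simp [bbe]; try ring
lemma ph31 (w : V7) : phi (bb 3) (bb 1) w = -w 5 := by
  rw [phi_eval]; simp [bbe]; try ring
lemma ph32 (w : V7) : phi (bb 3) (bb 2) w = w 6 := by
  rw [phi_eval]; simp [bbe]; try ring
lemma ph33 (w : V7) : phi (bb 3) (bb 3) w = 0 := by
  rw [phi_eval]; simp [bbe]; try ring
lemma ph34 (w : V7) : phi (bb 3) (bb 4) w = w 0 := by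
  rw [phi_eval]; simp [bbe]; try ring
lemma ph35 (w : V7) : phi (bb 3) (bb 5) w = w 1 := by
  rw [phi_eval]; simp [bbe]; try ring
lemma ph36 (w : V7) : phi (bb 3) (bb 6) w = -w 2 := by
  rw [phi_eval]; simp [bbe]; try ring
lemma ph40 (w : V7) : phi (bb 4) (bb 0) w = w 3 := by
  rw [phi_eval]; simp [bbe]; try ring
lemma ph41 (w : V7) : phi (bb 4) (bb 1) w = w 6 := by
  rw [phi_eval]; simp [bbe]; try ring
lemma ph42 (w : V7) : phi (bb 4) (bb 2) w = w 5 := by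
  rw [phi_eval]; simp [bbe]; try ring
lemma ph43 (w : V7) : phi (bb 4) (bb 3) w = -w 0 := by
  rw [phi_eval]; simp [bbe]; try ring
lemma ph44 (w : V7) : phi (bb 4) (bb 4) w = 0 := by
  rw [phi_eval]; simp [bbe]; try ring
lemma ph45 (w : V7) : phi (bb 4) (bb 5) w = -w 2 := by
  rw [phi_eval]; simp [bbe]; try ring
lemma ph46 (w : V7) : phi (bb 4) (bb 6) w = -w 1 := by
  rw [phi_eval]; simp [bbe]; try ring
lemma ph50 (w : V7) : phi (bb 5) (bb 0) w = -w 6 := by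
  rw [phi_eval]; simp [bbe]; try ring
lemma ph51 (w : V7) : phi (bb 5) (bb 1) w = w 3 := by
  rw [phi_eval]; simp [bbe]; try ring
lemma ph52 (w : V7) : phi (bb 5) (bb 2) w = -w 4 := by
  rw [phi_eval]; simp [bbe]; try ring
lemma ph53 (w : V7) : phi (bb 5) (bb 3) w = -w 1 := by
  rw [phi_eval]; simp [bbe]; try ring
lemma ph54 (w : V7) : phi (bb 5) (bb 4) w = w 2 := by
  rw [phi_eval]; simp [bbe]; try ring
lemma ph55 (w : V7) : phi (bb 5) (bb 5) w = 0 := by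
  rw [phi_eval]; simp [bbe]; try ring
lemma ph56 (w : V7) : phi (bb 5) (bb 6) w = w 0 := by
  rw [phi_eval]; simp [bbe]; try ring
lemma ph60 (w : V7) : phi (bb 6) (bb 0) w = w 5 := by
  rw [phi_eval]; simp [bbe]; try ring
lemma ph61 (w : V7) : phi (bb 6) (bb 1) w = -w 4 := by
  rw [phi_eval]; simp [bbe]; try ring
lemma ph62 (w : V7) : phi (bb 6) (bb 2) w = -w 3 := by
  rw [phi_eval]; simp [bbe]; try ring
lemma ph63 (w : V7) : phi (bb 6) (bb 3) w = w 2 := by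
  rw [phi_eval]; simp [bbe]; try ring
lemma ph64 (w : V7) : phi (bb 6) (bb 4) w = w 1 := by
  rw [phi_eval]; simp [bbe]; try ring
lemma ph65 (w : V7) : phi (bb 6) (bb 5) w = -w 0 := by
  rw [phi_eval]; simp [bbe]; try ring
lemma ph66 (w : V7) : phi (bb 6) (bb 6) w = 0 := by
  rw [phi_eval]; simp [bbe]; try ring

lemma hC (F : V7 →ₗ[ℝ] V7 →ₗ[ℝ] ℝ)
    (halt : ∀ v : V7, F v v = 0)
    (hz1 : ∀ v : V7, F (bb 0) v = 0) (hz2 : ∀ v : V7, F v (bb 0) = 0)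
    (sk : ∀ v w : V7, F w v = -F v w) (w : V7) :
    (1 / 2 : ℝ) * ∑ i : Fin 7, ∑ j : Fin 7, phi (bb i) (bb j) w * F (bb i) (bb j) =
      w 0 * (F (bb 1) (bb 2) + F (bb 3) (bb 4) + F (bb 5) (bb 6))
    + w 1 * (F (bb 3) (bb 5) - F (bb 4) (bb 6))
    + w 2 * (-F (bb 3) (bb 6) - F (bb 4) (bb 5))
    + w 3 * (F (bb 2) (bb 6) - F (bb 1) (bb 5))
    + w 4 * (F (bb 1) (bb 6) + F (bb 2) (bb 5))
    + w 5 * (F (bb 1) (bb 3) - F (bb 2) (bb 4))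
    + w 6 * (-F (bb 1) (bb 4) - F (bb 2) (bb 3)) := by
  have s21 : F (bb 2) (bb 1) = -F (bb 1) (bb 2) := sk (bb 1) (bb 2)
  have s31 : F (bb 3) (bb 1) = -F (bb 1) (bb 3) := sk (bb 1) (bb 3)
  have s41 : F (bb 4) (bb 1) = -F (bb 1) (bb 4) := sk (bb 1) (bb 4)
  have s51 : F (bb 5) (bb 1) = -F (bb 1) (bb 5) := sk (bb 1) (bb 5)
  have s61 : F (bb 6) (bb 1) = -F (bb 1) (bb 6) := sk (bb 1) (bb 6)
  have s32 : F (bb 3) (bb 2) = -F (bb 2) (bb 3) := sk (bb 2) (bb 3)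
  have s42 : F (bb 4) (bb 2) = -F (bb 2) (bb 4) := sk (bb 2) (bb 4)
  have s52 : F (bb 5) (bb 2) = -F (bb 2) (bb 5) := sk (bb 2) (bb 5)
  have s62 : F (bb 6) (bb 2) = -F (bb 2) (bb 6) := sk (bb 2) (bb 6)
  have s43 : F (bb 4) (bb 3) = -F (bb 3) (bb 4) := sk (bb 3) (bb 4)
  have s53 : F (bb 5) (bb 3) = -F (bb 3) (bb 5) := sk (bb 3) (bb 5)
  have s63 : F (bb 6) (bb 3) = -F (bb 3) (bb 6) := sk (bb 3) (bb 6)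
  have s54 : F (bb 5) (bb 4) = -F (bb 4) (bb 5) := sk (bb 4) (bb 5)
  have s64 : F (bb 6) (bb 4) = -F (bb 4) (bb 6) := sk (bb 4) (bb 6)
  have s65 : F (bb 6) (bb 5) = -F (bb 5) (bb 6) := sk (bb 5) (bb 6)
  simp only [Fin.sum_univ_seven, ph00, ph01, ph02, ph03, ph04, ph05, ph06, ph10, ph11, ph12, ph13, ph14, ph15, ph16, ph20, ph21, ph22, ph23, ph24, ph25, ph26, ph30, ph31, ph32, ph33, ph34, ph35, ph36, ph40, ph41, ph42, ph43, ph44, ph45, ph46, ph50, ph51, ph52, ph53, ph54, ph55, ph56, ph60, ph61, ph62, ph63, ph64, ph65, ph66]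
  simp only [halt, hz1, hz2, s21, s31, s41, s51, s61, s32, s42, s52, s62, s43, s53, s63, s54, s64, s65]
  ring

theorem contraction_vanishes_iff_HYM
    (F : V7 →ₗ[ℝ] V7 →ₗ[ℝ] ℝ)
    (halt : ∀ v : V7, F v v = 0)
    (hpull : ∀ u v : V7, (∀ i : Fin 7, i ≠ 0 → u i = 0) → F u v = 0 ∧ F v u = 0) :
    (∀ w : V7,
        (1 / 2 : ℝ) * ∑ i : Fin 7, ∑ j : Fin 7,
            phi (bb i) (bb j) w * F (bb i) (bb j) = 0) ↔
      ((∀ v w : V7, v 0 = 0 → w 0 = 0 → F (J v) (J w) = F v w) ∧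
        ∑ i : Fin 6, F (bb i.succ) (J (bb i.succ)) = 0) := by
  have hb0 : ∀ i : Fin 7, i ≠ 0 → bb 0 i = 0 := by
    intro i hi; simp [bbe, hi]
  have hz1 : ∀ v : V7, F (bb 0) v = 0 := fun v => (hpull (bb 0) v hb0).1
  have hz2 : ∀ v : V7, F v (bb 0) = 0 := fun v => (hpull (bb 0) v hb0).2
  have sk : ∀ v w : V7, F w v = -F v w := by
    intro v w
    have h := halt (v + w)
    simp only [map_add, LinearMap.add_apply] at h
    have h1 := halt v; have h2 := halt w
    linarith
  have s21 : F (bb 2) (bb 1) = -F (bb 1) (bb 2) := sk (bb 1) (bb 2)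
  have s31 : F (bb 3) (bb 1) = -F (bb 1) (bb 3) := sk (bb 1) (bb 3)
  have s41 : F (bb 4) (bb 1) = -F (bb 1) (bb 4) := sk (bb 1) (bb 4)
  have s51 : F (bb 5) (bb 1) = -F (bb 1) (bb 5) := sk (bb 1) (bb 5)
  have s61 : F (bb 6) (bb 1) = -F (bb 1) (bb 6) := sk (bb 1) (bb 6)
  have s32 : F (bb 3) (bb 2) = -F (bb 2) (bb 3) := sk (bb 2) (bb 3)
  have s42 : F (bb 4) (bb 2) = -F (bb 2) (bb 4) := sk (bb 2) (bb 4)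
  have s52 : F (bb 5) (bb 2) = -F (bb 2) (bb 5) := sk (bb 2) (bb 5)
  have s62 : F (bb 6) (bb 2) = -F (bb 2) (bb 6) := sk (bb 2) (bb 6)
  have s43 : F (bb 4) (bb 3) = -F (bb 3) (bb 4) := sk (bb 3) (bb 4)
  have s53 : F (bb 5) (bb 3) = -F (bb 3) (bb 5) := sk (bb 3) (bb 5)
  have s63 : F (bb 6) (bb 3) = -F (bb 3) (bb 6) := sk (bb 3) (bb 6)
  have s54 : F (bb 5) (bb 4) = -F (bb 4) (bb 5) := sk (bb 4) (bb 5)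
  have s64 : F (bb 6) (bb 4) = -F (bb 4) (bb 6) := sk (bb 4) (bb 6)
  have s65 : F (bb 6) (bb 5) = -F (bb 5) (bb 6) := sk (bb 5) (bb 6)
  constructor
  · intro h
    have hk : ∀ w : V7,
        w 0 * (F (bb 1) (bb 2) + F (bb 3) (bb 4) + F (bb 5) (bb 6))
      + w 1 * (F (bb 3) (bb 5) - F (bb 4) (bb 6))
      + w 2 * (-F (bb 3) (bb 6) - F (bb 4) (bb 5))
      + w 3 * (F (bb 2) (bb 6) - F (bb 1) (bb 5))
      + w 4 * (F (bb 1) (bb 6) + F (bb 2) (bb 5))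
      + w 5 * (F (bb 1) (bb 3) - F (bb 2) (bb 4))
      + w 6 * (-F (bb 1) (bb 4) - F (bb 2) (bb 3)) = 0 := by
      intro w; rw [← hC F halt hz1 hz2 sk w]; exact h w
    have c0 : F (bb 1) (bb 2) + F (bb 3) (bb 4) + F (bb 5) (bb 6) = 0 := by
      have := hk (bb 0); simp [bbe] at this; linarith
    have c1 : F (bb 2) (bb 4) = F (bb 1) (bb 3) := by
      have := hk (bb 5); simp [bbe] at this; linarith
    have c2 : F (bb 2) (bb 3) = -F (bb 1) (bb 4) := by
      have := hk (bb 6); simp [bbe] at this; linarith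
    have c3 : F (bb 2) (bb 6) = F (bb 1) (bb 5) := by
      have := hk (bb 3); simp [bbe] at this; linarith
    have c4 : F (bb 2) (bb 5) = -F (bb 1) (bb 6) := by
      have := hk (bb 4); simp [bbe] at this; linarith
    have c5 : F (bb 4) (bb 6) = F (bb 3) (bb 5) := by
      have := hk (bb 1); simp [bbe] at this; linarith
    have c6 : F (bb 4) (bb 5) = -F (bb 3) (bb 6) := by
      have := hk (bb 2); simp [bbe] at this; linarith
    constructor
    · intro v w hv0 hw0
      rw [hFexp F (J v) (J w), hFexp F v w]
      simp only [Fin.sum_univ_seven, Jc0, Jc1, Jc2, Jc3, Jc4, Jc5, Jc6]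
      simp only [halt, hz1, hz2, s21, s31, s41, s51, s61, s32, s42, s52, s62, s43, s53, s63, s54, s64, s65, c1, c2, c3, c4, c5, c6, hv0, hw0]
      ring
    · simp only [Fin.sum_univ_six, show (0 : Fin 6).succ = 1 from rfl,
        show (1 : Fin 6).succ = 2 from rfl, show (2 : Fin 6).succ = 3 from rfl,
        show (3 : Fin 6).succ = 4 from rfl, show (4 : Fin 6).succ = 5 from rfl,
        show (5 : Fin 6).succ = 6 from rfl, hJb1, hJb2, hJb3, hJb4, hJb5, hJb6,
        map_neg, LinearMap.neg_apply, s21, s43, s65]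
      linarith
  · rintro ⟨h11, htr⟩
    have c1 : F (bb 2) (bb 4) = F (bb 1) (bb 3) := by
      have := h11 (bb 1) (bb 3) (by simp [bbe]) (by simp [bbe])
      rwa [hJb1, hJb3] at this
    have c2 : F (bb 2) (bb 3) = -F (bb 1) (bb 4) := by
      have := h11 (bb 1) (bb 4) (by simp [bbe]) (by simp [bbe])
      rw [hJb1, hJb4, map_neg] at this; linarith
    have c3 : F (bb 2) (bb 6) = F (bb 1) (bb 5) := by
      have := h11 (bb 1) (bb 5) (by simp [bbe]) (by simp [bbe])
      rwa [hJb1, hJb5] at this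
    have c4 : F (bb 2) (bb 5) = -F (bb 1) (bb 6) := by
      have := h11 (bb 1) (bb 6) (by simp [bbe]) (by simp [bbe])
      rw [hJb1, hJb6, map_neg] at this; linarith
    have c5 : F (bb 4) (bb 6) = F (bb 3) (bb 5) := by
      have := h11 (bb 3) (bb 5) (by simp [bbe]) (by simp [bbe])
      rwa [hJb3, hJb5] at this
    have c6 : F (bb 4) (bb 5) = -F (bb 3) (bb 6) := by
      have := h11 (bb 3) (bb 6) (by simp [bbe]) (by simp [bbe])
      rw [hJb3, hJb6, map_neg] at this; linarith
    have c0 : F (bb 1) (bb 2) + F (bb 3) (bb 4) + F (bb 5) (bb 6) = 0 := by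
      simp only [Fin.sum_univ_six, show (0 : Fin 6).succ = 1 from rfl,
        show (1 : Fin 6).succ = 2 from rfl, show (2 : Fin 6).succ = 3 from rfl,
        show (3 : Fin 6).succ = 4 from rfl, show (4 : Fin 6).succ = 5 from rfl,
        show (5 : Fin 6).succ = 6 from rfl, hJb1, hJb2, hJb3, hJb4, hJb5, hJb6,
        map_neg, LinearMap.neg_apply, s21, s43, s65] at htr
      linarith
    intro w
    rw [hC F halt hz1 hz2 sk w]
    linear_combination w 0 * c0 - w 1 * c5 - w 2 * c6 + w 3 * c3 + w 4 * c4
      - w 5 * c1 - w 6 * c2
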